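/- arXiv:0911.1813 — 2 statements merged into one kernel-verified Lean document; each statement's English description precedes it below -/
import Mathlib

section
/- Let X be a finite set with N = |X| ≥ 2, let D be a nonempty finite multiset over X, let f_1,…,f_k : X → {0,1} be predicates with k ≥ 1, let ε ∈ (0,1), and let m be a positive integer with m ≥ (80000/ε²)·ln(4k). Let C_0 be the set of all multisets of size m over X. Let H ⊆ {1,…,k} be a set of 'hard' indices and for each i ∈ H let a_i ∈ ℝ satisfy |f_i(D) − a_i| ≤ ε/100. Define inductively C_i = {S ∈ C_{i−1} : |f_i(S) − a_i| ≤ ε/50} for i ∈ H and C_i = C_{i−1} for i ∉ H. Assume that for every i ∈ H, (1/#C_{i−1})·∑_{S ∈ C_{i−1}} exp(−|f_i(D) − f_i(S)|/ε) < 91/100. Then #H < 20·m·ln N. -/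
/-!
Every sample still consistent with a hard answer has that query's value within `3ε/100` of its
value on `D`, so it scores at least `exp (-3/100) ≥ 97/100`; as the average score is below
`91/100`, a hard step keeps at most a fraction `91/97 < 94/100` of the consistent set. At most
`|X|^m` samples of size `m` exist, so at most `(94/100)^#H · |X|^m` survive all hard steps.
Conversely, a Chernoff bound for sampling `m` entries of `D` with replacement, together with a
union bound over the `k` queries, produces a sample whose values are all `ε/100`-close to those
of `D`; it survives every step, so `1 ≤ (94/100)^#H · |X|^m`, and `ln (100/94) > 1/20`.
-/

/-- The fraction of elements of the multiset `D` (counted with multiplicity) satisfying the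
predicate `f`. -/
noncomputable def multisetFrac {X : Type*} (f : X → Bool) (D : Multiset X) : ℝ :=
  (D.countP (fun x => f x = true) : ℝ) / (Multiset.card D : ℝ)

open Finset Real

section Hoeffding

variable {Y : Type*} [Fintype Y]

lemma sum_exp_mul_le_of_sum_sq_le (g : Y → ℝ) (hg : ∀ y, |g y| ≤ 1) (hmean : ∑ y, g y = 0)
    (hvar : ∑ y, g y ^ 2 ≤ Fintype.card Y / 4) {s : ℝ} (hs : |s| ≤ 1) :
    ∑ y, exp (s * g y) ≤ Fintype.card Y * exp (s ^ 2 / 4) := by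
  have hpoint : ∀ y, exp (s * g y) ≤ 1 + s * g y + s ^ 2 * g y ^ 2 := fun y => by
    have hsg : |s * g y| ≤ 1 := by
      rw [abs_mul]; exact mul_le_one₀ hs (abs_nonneg _) (hg y)
    have := (abs_le.1 (abs_exp_sub_one_sub_id_le hsg)).2
    linarith [mul_pow s (g y) 2]
  calc ∑ y, exp (s * g y) ≤ ∑ y, (1 + s * g y + s ^ 2 * g y ^ 2) :=
        sum_le_sum fun y _ => hpoint y
    _ = Fintype.card Y + s * ∑ y, g y + s ^ 2 * ∑ y, g y ^ 2 := by
        simp only [sum_add_distrib, ← mul_sum, sum_const, card_univ, nsmul_eq_mul, mul_one]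
    _ ≤ Fintype.card Y * (1 + s ^ 2 / 4) := by
        rw [hmean]; nlinarith [sq_nonneg s]
    _ ≤ Fintype.card Y * exp (s ^ 2 / 4) := by
        gcongr; linarith [add_one_le_exp (s ^ 2 / 4)]

lemma card_filter_le_sum_le_exp_mul_pow (g : Y → ℝ) (m : ℕ) (a : ℝ) {s : ℝ} (hs : 0 ≤ s) :
    (#{ω : Fin m → Y | a ≤ ∑ j, g (ω j)} : ℝ) ≤ exp (-(s * a)) * (∑ y, exp (s * g y)) ^ m := by
  rw [Fintype.sum_pow, mul_sum, card_eq_sum_ones, Nat.cast_sum, Nat.cast_one]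
  calc ∑ ω ∈ univ.filter (fun ω : Fin m → Y => a ≤ ∑ j, g (ω j)), (1 : ℝ)
      ≤ ∑ ω ∈ univ.filter (fun ω : Fin m → Y => a ≤ ∑ j, g (ω j)),
          exp (-(s * a)) * ∏ j, exp (s * g (ω j)) := by
        refine sum_le_sum fun ω hω => ?_
        rw [← exp_sum, ← exp_add, ← mul_sum]
        exact one_le_exp (by nlinarith [(mem_filter.1 hω).2])
    _ ≤ ∑ ω : Fin m → Y, exp (-(s * a)) * ∏ j, exp (s * g (ω j)) :=
        sum_le_sum_of_subset_of_nonneg (filter_subset _ _) fun _ _ _ => by positivity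

lemma card_filter_le_sum_le (g : Y → ℝ) (hg : ∀ y, |g y| ≤ 1) (hmean : ∑ y, g y = 0)
    (hvar : ∑ y, g y ^ 2 ≤ Fintype.card Y / 4) (m : ℕ) {t : ℝ} (ht0 : 0 ≤ t) (ht : t ≤ 1 / 2) :
    (#{ω : Fin m → Y | m * t ≤ ∑ j, g (ω j)} : ℝ) ≤ exp (-(m * t ^ 2)) * Fintype.card Y ^ m := by
  have hs : |2 * t| ≤ 1 := by rw [abs_of_nonneg (by positivity)]; linarith
  calc _ ≤ exp (-(2 * t * (m * t))) * (∑ y, exp (2 * t * g y)) ^ m :=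
        card_filter_le_sum_le_exp_mul_pow g m _ (by positivity)
    _ ≤ exp (-(2 * t * (m * t))) * (Fintype.card Y * exp ((2 * t) ^ 2 / 4)) ^ m := by
        gcongr
        exact sum_exp_mul_le_of_sum_sq_le g hg hmean hvar hs
    _ = exp (-(m * t ^ 2)) * Fintype.card Y ^ m := by
        rw [mul_pow, ← exp_nat_mul, mul_left_comm, ← exp_add]; ring_nf

lemma card_filter_le_abs_sum_le (g : Y → ℝ) (hg : ∀ y, |g y| ≤ 1) (hmean : ∑ y, g y = 0)
    (hvar : ∑ y, g y ^ 2 ≤ Fintype.card Y / 4) (m : ℕ) {t : ℝ} (ht0 : 0 ≤ t) (ht : t ≤ 1 / 2) :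
    (#{ω : Fin m → Y | m * t ≤ |∑ j, g (ω j)|} : ℝ)
      ≤ 2 * exp (-(m * t ^ 2)) * Fintype.card Y ^ m := by
  classical
  have hup := card_filter_le_sum_le g hg hmean hvar m ht0 ht
  have hdown := card_filter_le_sum_le (-g) (by simpa using hg) (by simp [hmean])
    (by simpa using hvar) m ht0 ht
  have hsub : univ.filter (fun ω : Fin m → Y => m * t ≤ |∑ j, g (ω j)|)
      ⊆ univ.filter (fun ω : Fin m → Y => m * t ≤ ∑ j, g (ω j))
        ∪ univ.filter (fun ω : Fin m → Y => m * t ≤ ∑ j, (-g) (ω j)) := by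
    intro ω
    simp only [mem_filter, mem_union, mem_univ, true_and, Pi.neg_apply, sum_neg_distrib]
    exact le_abs.1
  calc (#{ω : Fin m → Y | m * t ≤ |∑ j, g (ω j)|} : ℝ)
      ≤ #{ω : Fin m → Y | m * t ≤ ∑ j, g (ω j)} + #{ω : Fin m → Y | m * t ≤ ∑ j, (-g) (ω j)} := by
        exact_mod_cast (card_le_card hsub).trans (card_union_le _ _)
    _ ≤ _ := by linarith

lemma abs_sub_mean_le_one {h : Y → ℝ} (h0 : ∀ y, 0 ≤ h y) (h1 : ∀ y, h y ≤ 1) (y : Y) :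
    |h y - (∑ z, h z) / Fintype.card Y| ≤ 1 := by
  have hmean0 : 0 ≤ (∑ z, h z) / Fintype.card Y :=
    div_nonneg (sum_nonneg fun z _ => h0 z) (Nat.cast_nonneg _)
  have hmean1 : (∑ z, h z) / Fintype.card Y ≤ 1 := by
    refine div_le_one_of_le₀ ?_ (Nat.cast_nonneg _)
    simpa using sum_le_sum fun z (_ : z ∈ univ) => h1 z
  rw [abs_le]; constructor <;> linarith [h0 y, h1 y]

lemma sum_sub_mean_eq_zero [Nonempty Y] (h : Y → ℝ) :
    ∑ y, (h y - (∑ z, h z) / Fintype.card Y) = 0 := by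
  rw [sum_sub_distrib, sum_const, card_univ, nsmul_eq_mul, mul_div_cancel₀ _ (by positivity),
    sub_self]

lemma sum_sub_mean_sq_le [Nonempty Y] {h : Y → ℝ} (h0 : ∀ y, 0 ≤ h y) (h1 : ∀ y, h y ≤ 1) :
    ∑ y, (h y - (∑ z, h z) / Fintype.card Y) ^ 2 ≤ Fintype.card Y / 4 := by
  set n : ℝ := (Fintype.card Y : ℝ) with hn_def
  set μ := (∑ z, h z) / n
  have hn : 0 < n := by positivity
  have hsum : ∑ z, h z = n * μ := by rw [mul_div_cancel₀ _ hn.ne']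
  -- `h² ≤ h` on `[0, 1]`, so the variance is at most `μ (1 - μ) ≤ 1/4`.
  have hsq : ∑ y, h y ^ 2 ≤ ∑ y, h y := sum_le_sum fun y _ => by nlinarith [h0 y, h1 y]
  calc ∑ y, (h y - μ) ^ 2 = ∑ y, h y ^ 2 - 2 * μ * ∑ y, h y + n * μ ^ 2 := by
        simp only [sub_sq, sum_add_distrib, sum_sub_distrib, ← mul_sum, ← sum_mul, sum_const,
          card_univ, nsmul_eq_mul, hn_def]; ring
    _ ≤ n / 4 := by rw [hsum] at hsq ⊢; nlinarith [sq_nonneg (μ - 1 / 2)]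

lemma exists_forall_abs_sum_sub_mean_lt [Nonempty Y] {ι : Type*} (H : Finset ι)
    {h : ι → Y → ℝ} (h0 : ∀ i y, 0 ≤ h i y) (h1 : ∀ i y, h i y ≤ 1) (m : ℕ) {t : ℝ}
    (ht0 : 0 ≤ t) (ht : t ≤ 1 / 2) (hH : 2 * #H * exp (-(m * t ^ 2)) < 1) :
    ∃ ω : Fin m → Y, ∀ i ∈ H, |∑ j, (h i (ω j) - (∑ y, h i y) / Fintype.card Y)| < m * t := by
  classical
  set n : ℝ := (Fintype.card Y : ℝ) with hn_def
  set bad : ι → Finset (Fin m → Y) := fun i =>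
    univ.filter fun ω => m * t ≤ |∑ j, (h i (ω j) - (∑ y, h i y) / n)|
  have hbad : ∀ i, (#(bad i) : ℝ) ≤ 2 * exp (-(m * t ^ 2)) * n ^ m := fun i =>
    card_filter_le_abs_sum_le _ (abs_sub_mean_le_one (h0 i) (h1 i)) (sum_sub_mean_eq_zero (h i))
      (sum_sub_mean_sq_le (h0 i) (h1 i)) m ht0 ht
  by_contra! hcover
  have hcover : (univ : Finset (Fin m → Y)) ⊆ H.biUnion bad := fun ω _ => by
    obtain ⟨i, hi, hω⟩ := hcover ω
    exact mem_biUnion.2 ⟨i, hi, mem_filter.2 ⟨mem_univ ω, hω⟩⟩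
  have hn : 0 < n ^ m := by positivity
  have : n ^ m ≤ 2 * #H * exp (-(m * t ^ 2)) * n ^ m := calc
    n ^ m = #(univ : Finset (Fin m → Y)) := by simp [hn_def]
    _ ≤ #(H.biUnion bad) := by exact_mod_cast card_le_card hcover
    _ ≤ ∑ i ∈ H, (#(bad i) : ℝ) := by exact_mod_cast card_biUnion_le
    _ ≤ ∑ i ∈ H, 2 * exp (-(m * t ^ 2)) * n ^ m := sum_le_sum fun i _ => hbad i
    _ = 2 * #H * exp (-(m * t ^ 2)) * n ^ m := by rw [sum_const, nsmul_eq_mul]; ring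
  nlinarith

end Hoeffding

lemma multisetFrac_map_univ {X Y : Type*} [Fintype Y] (u : Y → X) (q : X → Bool) :
    multisetFrac q ((univ : Finset Y).val.map u)
      = (∑ y, if q (u y) then (1 : ℝ) else 0) / Fintype.card Y := by
  classical
  rw [multisetFrac, Multiset.countP_map, Multiset.card_map, card_val, card_univ, sum_boole]
  rfl

lemma exists_card_eq_forall_abs_multisetFrac_sub_lt {X ι : Type*} {D : Multiset X}
    (hD : D ≠ 0) (H : Finset ι) (f : ι → X → Bool) {m : ℕ} (hm : 0 < m) {t : ℝ} (ht0 : 0 ≤ t)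
    (ht : t ≤ 1 / 2) (hH : 2 * #H * exp (-(m * t ^ 2)) < 1) :
    ∃ S : Multiset X, Multiset.card S = m ∧
      ∀ i ∈ H, |multisetFrac (f i) S - multisetFrac (f i) D| < t := by
  classical
  -- Sample from the type `D` of entries of `D`, counted with multiplicity.
  have : Nonempty D :=
    Fintype.card_pos_iff.1 (by rw [Multiset.card_coe]; exact Multiset.card_pos.2 hD)
  set h : ι → D → ℝ := fun i y => if f i y then 1 else 0
  obtain ⟨ω, hω⟩ := exists_forall_abs_sum_sub_mean_lt H (h := h) (fun i y => by positivity)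
    (fun i y => by simp only [h]; split <;> norm_num) m ht0 ht hH
  refine ⟨(univ : Finset (Fin m)).val.map fun j => (ω j : X), by simp, fun i hi => ?_⟩
  have hm' : (0 : ℝ) < m := by exact_mod_cast hm
  have hD' := multisetFrac_map_univ (fun y : D => (y : X)) (f i)
  rw [Multiset.map_univ_coe] at hD'
  rw [hD', multisetFrac_map_univ, Fintype.card_fin]
  have hsum : ∑ j, (h i (ω j) - (∑ y, h i y) / Fintype.card D)
      = m * ((∑ j, h i (ω j)) / m - (∑ y, h i y) / Fintype.card D) := by
    rw [sum_sub_distrib, sum_const, card_univ, Fintype.card_fin, nsmul_eq_mul]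
    field_simp
  have hωi := hω i hi
  rw [hsum, abs_mul, abs_of_pos hm'] at hωi
  exact lt_of_mul_lt_mul_left hωi hm'.le

lemma card_le_pow_of_forall_card_eq {X : Type*} [Fintype X] {C : Finset (Multiset X)} {m : ℕ}
    (hC : ∀ S ∈ C, Multiset.card S = m) : #C ≤ Fintype.card X ^ m := by
  classical
  have hsub : C ⊆ univ.image fun ω : Fin m → X => (univ : Finset (Fin m)).val.map ω := by
    intro S hS
    obtain ⟨l, rfl⟩ := Quot.exists_rep S
    obtain rfl : l.length = m := hC _ hS
    exact mem_image.2 ⟨fun j => l[j], mem_univ _, by simp⟩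
  calc #C ≤ #(univ : Finset (Fin m → X)) := (card_le_card hsub).trans card_image_le
    _ = Fintype.card X ^ m := by simp

lemma card_mul_le_of_average_lt {α : Type*} {C C' : Finset α} (hsub : C' ⊆ C) {φ : α → ℝ}
    (hφ : ∀ S, 0 ≤ φ S) {b c : ℝ} (hb : ∀ S ∈ C', b ≤ φ S)
    (havg : 1 / #C * ∑ S ∈ C, φ S < c) : b * #C' ≤ c * #C := by
  rcases C.eq_empty_or_nonempty with rfl | hC
  · simp [subset_empty.1 hsub]
  have hpos : (0 : ℝ) < #C := by exact_mod_cast hC.card_pos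
  rw [one_div, inv_mul_lt_iff₀ hpos] at havg
  calc b * #C' = #C' • b := by rw [nsmul_eq_mul, mul_comm]
    _ ≤ ∑ S ∈ C', φ S := card_nsmul_le_sum _ _ _ hb
    _ ≤ ∑ S ∈ C, φ S := sum_le_sum_of_subset_of_nonneg hsub fun S _ _ => hφ S
    _ ≤ c * #C := by linarith

lemma card_le_of_average_exp_neg_lt {α : Type*} {C C' : Finset α} (hsub : C' ⊆ C)
    {v : α → ℝ} {x a ε : ℝ} (hε : 0 < ε) (hx : |x - a| ≤ ε / 100)
    (hC' : ∀ S ∈ C', |v S - a| ≤ ε / 50)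
    (havg : 1 / #C * ∑ S ∈ C, exp (-|x - v S| / ε) < 91 / 100) :
    (#C' : ℝ) ≤ 94 / 100 * #C := by
  have hclose : ∀ S ∈ C', exp (-(3 / 100)) ≤ exp (-|x - v S| / ε) := by
    intro S hS
    rw [exp_le_exp, neg_div, neg_le_neg_iff, div_le_iff₀ hε]
    linarith [abs_sub_le x a (v S), abs_sub_comm a (v S), hC' S hS]
  have := card_mul_le_of_average_lt hsub (fun _ => (exp_pos _).le) hclose havg
  -- `exp (-3/100) ≥ 97/100` and `91/97 < 94/100`
  nlinarith [add_one_le_exp (-(3 / 100) : ℝ)]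

lemma le_pow_card_mul_of_le_mul {u : ℕ → ℝ} {r : ℝ} (hr : 0 ≤ r) {k : ℕ} {H : Finset ℕ}
    (hH : H ⊆ Icc 1 k) (hle : ∀ i ∈ Icc 1 k, u i ≤ u (i - 1))
    (hmul : ∀ i ∈ H, u i ≤ r * u (i - 1)) : u k ≤ r ^ #H * u 0 := by
  induction k generalizing H with
  | zero => simp [subset_empty.1 (hH.trans (by simp))]
  | succ k ih =>
    have hH' : H.erase (k + 1) ⊆ Icc 1 k := fun i hi => by
      have hi' := mem_Icc.1 (hH (mem_of_mem_erase hi))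
      exact mem_Icc.2 ⟨hi'.1, by have := ne_of_mem_erase hi; omega⟩
    have ih := ih hH' (fun i hi => hle i (Icc_subset_Icc_right k.le_succ hi))
      fun i hi => hmul i (mem_of_mem_erase hi)
    by_cases hk : k + 1 ∈ H
    · calc u (k + 1) ≤ r * u k := hmul _ hk
        _ ≤ r * (r ^ #(H.erase (k + 1)) * u 0) := by gcongr
        _ = r ^ #H * u 0 := by rw [← card_erase_add_one hk, pow_succ]; ring
    · rw [erase_eq_of_notMem hk] at ih
      exact (hle _ (by simp)).trans ih

lemma lt_mul_log_of_one_le_pow_mul_pow {h m : ℕ} {N : ℝ} (hN : 1 < N) (hm : 0 < m)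
    (hle : 1 ≤ (94 / 100 : ℝ) ^ h * N ^ m) : (h : ℝ) < 20 * m * log N := by
  have hlog : 0 ≤ h * log (94 / 100) + m * log N := by
    rw [← log_pow, ← log_pow, ← log_mul (by positivity) (by positivity)]
    exact log_nonneg hle
  have h94 : log (94 / 100) < -(1 / 20) := by
    rw [log_lt_iff_lt_exp (by norm_num)]; linarith [add_one_le_exp (-(1 / 20))]
  have hmlog : 0 < (m : ℝ) * log N := mul_pos (by exact_mod_cast hm) (log_pos hN)
  nlinarith [(Nat.cast_nonneg h : (0 : ℝ) ≤ h)]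

lemma two_mul_mul_exp_neg_lt_one {h k m : ℕ} {ε : ℝ} (hε : 0 < ε) (hk : 1 ≤ k) (hh : h ≤ k)
    (hm : 80000 / ε ^ 2 * log (4 * k) ≤ m) : 2 * h * exp (-(m * (ε / 100) ^ 2)) < 1 := by
  have hk4 : (1 : ℝ) ≤ 4 * k := by
    have : (1 : ℝ) ≤ k := by exact_mod_cast hk
    linarith
  have hlog : log (4 * k) ≤ m * (ε / 100) ^ 2 := by
    rw [div_mul_eq_mul_div, div_le_iff₀ (by positivity)] at hm
    nlinarith [log_nonneg hk4, sq_nonneg ε]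
  calc 2 * h * exp (-(m * (ε / 100) ^ 2)) ≤ 2 * k * exp (-log (4 * k)) := by
        gcongr
    _ = 1 / 2 := by
        rw [exp_neg, exp_log (by linarith)]; field_simp; ring
    _ < 1 := by norm_num

/-- **Deterministic content of Lemma 8 (fewDiscounts).** Queries are indexed by `1,…,k`;
`H ⊆ {1,…,k}` is the set of hard queries, each answered `(ε/100)`-accurately by `a i`.
`C 0` is the set of all multisets of size `m` over `X`, and for `i ∈ {1,…,k}` the set `C i`
consists of those members of `C (i−1)` that are `(ε/50)`-consistent with `a i` when `i` is
hard, and `C i = C (i−1)` otherwise.  If every hard query has easiness score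
`(1/#C_{i−1}) · ∑_{S ∈ C_{i−1}} exp(−|f_i(D) − f_i(S)|/ε) < 91/100`, then the number of hard
queries is less than `20·m·ln |X|`. -/
theorem few_hard_queries {X : Type*} [Fintype X] (hN : 2 ≤ Fintype.card X)
    (D : Multiset X) (hD : D ≠ 0)
    (k : ℕ) (hk : 1 ≤ k) (f : ℕ → X → Bool)
    (ε : ℝ) (hε : 0 < ε ∧ ε < 1)
    (m : ℕ) (hm : 0 < m) (hm2 : (80000 / ε ^ 2) * Real.log (4 * k) ≤ (m : ℝ))
    (H : Finset ℕ) (hH : H ⊆ Finset.Icc 1 k)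
    (a : ℕ → ℝ) (ha : ∀ i ∈ H, |multisetFrac (f i) D - a i| ≤ ε / 100)
    (C : ℕ → Finset (Multiset X))
    (hC0 : ∀ S : Multiset X, S ∈ C 0 ↔ Multiset.card S = m)
    (hCstep : ∀ i ∈ Finset.Icc 1 k, ∀ S : Multiset X,
      S ∈ C i ↔ S ∈ C (i - 1) ∧ (i ∈ H → |multisetFrac (f i) S - a i| ≤ ε / 50))
    (hscore : ∀ i ∈ H,
      (1 / ((C (i - 1)).card : ℝ)) *
          ∑ S ∈ C (i - 1), Real.exp (-|multisetFrac (f i) D - multisetFrac (f i) S| / ε)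
        < 91 / 100) :
    (H.card : ℝ) < 20 * (m : ℝ) * Real.log (Fintype.card X) := by
  obtain ⟨hε0, hε1⟩ := hε
  have hHk : #H ≤ k := by simpa using card_le_card hH
  obtain ⟨S, hSm, hS⟩ := exists_card_eq_forall_abs_multisetFrac_sub_lt hD H f hm
    (by positivity) (by linarith) (two_mul_mul_exp_neg_lt_one hε0 hk hHk hm2)
  have hSC : ∀ i ≤ k, S ∈ C i := by
    intro i
    induction i with
    | zero => exact fun _ => (hC0 S).2 hSm
    | succ i ih =>
      intro hi
      rw [hCstep _ (mem_Icc.2 ⟨by omega, hi⟩), Nat.add_sub_cancel]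
      refine ⟨ih (by omega), fun hiH => ?_⟩
      linarith [abs_sub_le (multisetFrac (f (i + 1)) S) (multisetFrac (f (i + 1)) D) (a (i + 1)),
        hS _ hiH, ha _ hiH]
  have hshrink : ∀ i ∈ H, ((C i).card : ℝ) ≤ 94 / 100 * (C (i - 1)).card := fun i hi =>
    card_le_of_average_exp_neg_lt (fun S hS => ((hCstep i (hH hi) S).1 hS).1) hε0 (ha i hi)
      (fun S hS => ((hCstep i (hH hi) S).1 hS).2 hi) (hscore i hi)
  have hCk := le_pow_card_mul_of_le_mul (by norm_num) hH
    (fun i hi => by exact_mod_cast card_le_card fun S hS => ((hCstep i hi S).1 hS).1) hshrink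
  have hC0card : ((C 0).card : ℝ) ≤ Fintype.card X ^ m := by
    exact_mod_cast card_le_pow_of_forall_card_eq fun S hS => (hC0 S).1 hS
  refine lt_mul_log_of_one_le_pow_mul_pow (by exact_mod_cast hN) hm ?_
  calc (1 : ℝ) ≤ (C k).card := by exact_mod_cast card_pos.2 ⟨S, hSC k le_rfl⟩
    _ ≤ _ := hCk
    _ ≤ _ := mul_le_mul_of_nonneg_left hC0card (by positivity)
end

section
/- Let X be a finite set with N = |X| ≥ 2, let f_1,…,f_k : X → {0,1} be predicates with k ≥ 1, let ε ∈ (0,1), and let m be a positive integer with m ≥ (1280000/ε²)·ln(2k). Let C_0 = {F ∈ ℝ^X : F_x ≥ 0 for all x and ∑_x F_x ≤ m}, for F ∈ C_0 let f_i(F) = (1/m)·∑_{x : f_i(x)=1} F_x, and for ε′ > 0 and F* ∈ C_0 let Good_{ε′}(F*) = {F ∈ C_0 : |f_i(F) − f_i(F*)| ≤ ε′ for all i = 1,…,k}. Then, with Vol denoting Lebesgue measure on ℝ^X, Vol({F* ∈ C_0 : Vol(Good_{ε/200}(F*)) < Vol(C_0)/N^{2m}}) ≤ (2/N)^m · Vol(C_0).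 -/
/-!
Draw `m` i.i.d. points of `X`, each equal to `x` with probability `F x / m` (the missing mass
`1 - ∑ F / m` goes to an extra outcome that no query counts). By Hoeffding's inequality and a union
bound over the `2k` tails, once `m ≳ log (2k) / ε²` some sample has a histogram that is
`ε/400`-close to `F` in every query value. So the `ε/400`-neighbourhoods of the at most
`(N + 1) ^ m ≤ (2N) ^ m` sample histograms cover `C₀`. A bad `F*` lies in one of them, which is
then contained in the `ε/200`-neighbourhood of `F*` and hence has volume `< Vol(C₀) / N ^ (2m)`.
-/

open MeasureTheory ProbabilityTheory Real
open scoped ENNReal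

/-- The value of the predicate query `f` on the fractional histogram `F`, scaled by the
histogram size bound `m`: `f(F) = (1/m)·∑_{x : f(x)=1} F x`. -/
noncomputable def histQuery {X : Type*} [Fintype X] (m : ℕ) (f : X → Bool) (F : X → ℝ) : ℝ :=
  (1 / (m : ℝ)) * ∑ x ∈ Finset.univ.filter (fun x => f x = true), F x

lemma measureReal_mul_le_sum_sub_integral_le {Y : Type*} [MeasurableSpace Y] (ν : Measure Y)
    [IsProbabilityMeasure ν] {h : Y → ℝ} (h_meas : Measurable h) (h_mem : ∀ y, h y ∈ Set.Icc 0 1)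
    {m : ℕ} (hm : 0 < m) {δ : ℝ} (hδ : 0 ≤ δ) :
    (Measure.pi fun _ : Fin m => ν).real {ω | m * δ ≤ ∑ j, (h (ω j) - ∫ y, h y ∂ν)} ≤
      exp (-2 * m * δ ^ 2) := by
  have h_indep : iIndepFun (fun j (ω : Fin m → Y) => h (ω j) - ∫ y, h y ∂ν)
      (Measure.pi fun _ => ν) :=
    iIndepFun_pi (X := fun _ y => h y - ∫ y, h y ∂ν) fun _ => (h_meas.sub_const _).aemeasurable
  have h_subG : ∀ j ∈ Finset.univ, HasSubgaussianMGF (fun ω : Fin m → Y => h (ω j) - ∫ y, h y ∂ν)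
      ((‖(1 : ℝ) - 0‖₊ / 2) ^ 2) (Measure.pi fun _ => ν) := by
    intro j _
    have := hasSubgaussianMGF_of_mem_Icc (μ := Measure.pi fun _ : Fin m => ν)
      (X := fun ω => h (ω j)) (h_meas.comp (measurable_pi_apply j)).aemeasurable
      (ae_of_all _ fun ω => h_mem (ω j))
    rwa [integral_comp_eval h_meas.aestronglyMeasurable] at this
  have hm' : (m : ℝ) ≠ 0 := by positivity
  convert HasSubgaussianMGF.measure_sum_ge_le_of_iIndepFun h_indep h_subG
    (by positivity : 0 ≤ (m : ℝ) * δ) using 2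
  simp only [Finset.sum_const, Finset.card_univ, Fintype.card_fin, nsmul_eq_mul]; push_cast
  field_simp
  norm_num

theorem exists_sample_forall_abs_sum_sub_integral_le {Y : Type*} [MeasurableSpace Y]
    (ν : Measure Y) [IsProbabilityMeasure ν] {ι : Type*} [Fintype ι] {g : ι → Y → ℝ}
    (g_meas : ∀ i, Measurable (g i)) (g_mem : ∀ i y, g i y ∈ Set.Icc 0 1) {m : ℕ} (hm : 0 < m)
    {δ : ℝ} (hδ : 0 ≤ δ) (h_small : 2 * Fintype.card ι * exp (-2 * m * δ ^ 2) < 1) :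
    ∃ ω : Fin m → Y, ∀ i, |∑ j, g i (ω j) - m * ∫ y, g i y ∂ν| ≤ m * δ := by
  set μ := Measure.pi fun _ : Fin m => ν
  have h_sum : ∀ i (ω : Fin m → Y),
      ∑ j, (g i (ω j) - ∫ y, g i y ∂ν) = ∑ j, g i (ω j) - m * ∫ y, g i y ∂ν := by
    intro i ω
    simp [Finset.sum_sub_distrib]
  have h_sum_compl : ∀ i (ω : Fin m → Y),
      ∑ j, ((1 - g i (ω j)) - ∫ y, (1 - g i y) ∂ν) = -(∑ j, g i (ω j) - m * ∫ y, g i y ∂ν) := by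
    intro i ω
    have hint : Integrable (g i) ν :=
      .of_mem_Icc 0 1 (g_meas i).aemeasurable (ae_of_all _ (g_mem i))
    rw [integral_sub (integrable_const 1) hint]
    simp [Finset.sum_sub_distrib]
  set tail : (Y → ℝ) → Set (Fin m → Y) :=
    fun h => {ω | m * δ ≤ ∑ j, (h (ω j) - ∫ y, h y ∂ν)}
  by_contra! h_bad
  have h_cover : Set.univ ⊆ ⋃ i, tail (g i) ∪ tail (fun y => 1 - g i y) := by
    intro ω _
    obtain ⟨i, hi⟩ := h_bad ω
    simp only [tail, Set.mem_iUnion, Set.mem_union, Set.mem_ofPred_eq, h_sum, h_sum_compl]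
    exact ⟨i, (lt_abs.1 hi).imp le_of_lt le_of_lt⟩
  have h_tail : ∀ i,
      μ.real (tail (g i) ∪ tail (fun y => 1 - g i y)) ≤ 2 * exp (-2 * m * δ ^ 2) := by
    intro i
    have h_compl_mem : ∀ y, 1 - g i y ∈ Set.Icc (0 : ℝ) 1 := fun y =>
      ⟨by linarith [(g_mem i y).2], by linarith [(g_mem i y).1]⟩
    have h_upper : μ.real (tail (g i)) ≤ exp (-2 * m * δ ^ 2) :=
      measureReal_mul_le_sum_sub_integral_le ν (g_meas i) (g_mem i) hm hδ
    have h_lower : μ.real (tail fun y => 1 - g i y) ≤ exp (-2 * m * δ ^ 2) :=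
      measureReal_mul_le_sum_sub_integral_le ν (measurable_const.sub (g_meas i)) h_compl_mem hm hδ
    linarith [measureReal_union_le (μ := μ) (tail (g i)) (tail fun y => 1 - g i y)]
  have := calc (1 : ℝ) = μ.real Set.univ := probReal_univ.symm
    _ ≤ ∑ i, μ.real (tail (g i) ∪ tail (fun y => 1 - g i y)) :=
      (measureReal_mono h_cover).trans (measureReal_iUnion_fintype_le _)
    _ ≤ ∑ _i : ι, 2 * exp (-2 * m * δ ^ 2) := Finset.sum_le_sum fun i _ => h_tail i
  simp only [Finset.sum_const, Finset.card_univ, nsmul_eq_mul] at this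
  linarith

section Sampling

variable {X : Type*}

def queryIndicator (f : X → Bool) : Option X → ℝ :=
  fun o => o.elim 0 fun x => if f x then 1 else 0

lemma queryIndicator_mem_Icc (f : X → Bool) (o : Option X) : queryIndicator f o ∈ Set.Icc 0 1 := by
  rcases o with _ | x
  · simp [queryIndicator]
  · by_cases h : f x <;> simp [queryIndicator, h]

def sampleHist [DecidableEq X] {m : ℕ} (ω : Fin m → Option X) (x : X) : ℝ :=
  (Finset.univ.filter fun j => ω j = some x).card

lemma histQuery_sampleHist [Fintype X] [DecidableEq X] (f : X → Bool) {m : ℕ}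
    (ω : Fin m → Option X) :
    histQuery m f (sampleHist ω) = (1 / (m : ℝ)) * ∑ j, queryIndicator f (ω j) := by
  unfold histQuery sampleHist
  congr 1
  simp only [Finset.card_filter, Nat.cast_sum]
  rw [Finset.sum_comm]
  refine Finset.sum_congr rfl fun j _ => ?_
  rcases ω j with _ | y
  · simp [queryIndicator]
  · by_cases h : f y <;> simp [queryIndicator, h]

noncomputable def histPMF [Fintype X] (m : ℕ) (F : X → ℝ) (hF0 : ∀ x, 0 ≤ F x) (hF : ∑ x, F x ≤ m) :
    PMF (Option X) :=
  PMF.ofFintype (fun o => ENNReal.ofReal (o.elim (1 - (∑ x, F x) / m) fun x => F x / m)) <| by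
    rw [← ENNReal.ofReal_sum_of_nonneg, Fintype.sum_option]
    · simp [← Finset.sum_div]
    · rintro (_ | x) _
      · simpa using div_le_one_of_le₀ hF (Nat.cast_nonneg m)
      · exact div_nonneg (hF0 x) (Nat.cast_nonneg m)

lemma integral_queryIndicator_histPMF [Fintype X] [MeasurableSpace (Option X)]
    [MeasurableSingletonClass (Option X)] (f : X → Bool) {m : ℕ} {F : X → ℝ}
    (hF0 : ∀ x, 0 ≤ F x) (hF : ∑ x, F x ≤ m) :
    ∫ o, queryIndicator f o ∂(histPMF m F hF0 hF).toMeasure = histQuery m f F := by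
  rw [PMF.integral_eq_sum, Fintype.sum_option]
  simp [histPMF, queryIndicator, histQuery, Finset.sum_filter, Finset.mul_sum, div_eq_inv_mul,
    ENNReal.toReal_ofReal, hF0]

theorem exists_sampleHist_abs_histQuery_sub_le [Fintype X] [DecidableEq X] {ι : Type*}
    [Fintype ι] (f : ι → X → Bool) {m : ℕ} (hm : 0 < m) {δ : ℝ} (hδ : 0 ≤ δ)
    (h_small : 2 * Fintype.card ι * exp (-2 * m * δ ^ 2) < 1) {F : X → ℝ} (hF0 : ∀ x, 0 ≤ F x)
    (hF : ∑ x, F x ≤ m) :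
    ∃ ω : Fin m → Option X, ∀ i, |histQuery m (f i) (sampleHist ω) - histQuery m (f i) F| ≤ δ := by
  let : MeasurableSpace (Option X) := ⊤
  obtain ⟨ω, hω⟩ := exists_sample_forall_abs_sum_sub_integral_le (histPMF m F hF0 hF).toMeasure
    (fun _ => .of_discrete) (fun i => queryIndicator_mem_Icc (f i)) hm hδ h_small
  refine ⟨ω, fun i => ?_⟩
  have hm' : (0 : ℝ) < m := Nat.cast_pos.2 hm
  rw [histQuery_sampleHist, ← integral_queryIndicator_histPMF (f i) hF0 hF]
  rw [show ∀ S I : ℝ, 1 / (m : ℝ) * S - I = (S - m * I) / m from fun S I => by field_simp,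
    abs_div, abs_of_pos hm', div_le_iff₀ hm', mul_comm δ]
  exact hω i

end Sampling

theorem measure_setOf_measure_lt_le_card_mul {α β ι : Type*} [MeasurableSpace α]
    [PseudoMetricSpace β] [Fintype ι] (μ : Measure α) {C : Set α} (Q : α → β) (c : ι → β)
    {δ : ℝ} (hc : ∀ F ∈ C, ∃ j, dist (Q F) (c j) ≤ δ) (b : ℝ≥0∞) :
    μ {F' | F' ∈ C ∧ μ {F | F ∈ C ∧ dist (Q F) (Q F') ≤ 2 * δ} < b} ≤ Fintype.card ι * b := by
  set bad := {F' | F' ∈ C ∧ μ {F | F ∈ C ∧ dist (Q F) (Q F') ≤ 2 * δ} < b}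
  set ball : ι → Set α := fun j => {F | F ∈ C ∧ dist (Q F) (c j) ≤ δ}
  have h_cover : bad ⊆ ⋃ j, bad ∩ ball j := fun F' hF' =>
    let ⟨j, hj⟩ := hc F' hF'.1
    Set.mem_iUnion.2 ⟨j, hF', hF'.1, hj⟩
  have h_piece : ∀ j, μ (bad ∩ ball j) ≤ b := by
    intro j
    rcases (bad ∩ ball j).eq_empty_or_nonempty with h | ⟨F', ⟨-, hF'b⟩, -, hF'j⟩
    · simp [h]
    · calc μ (bad ∩ ball j) ≤ μ (ball j) := measure_mono Set.inter_subset_right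
        _ ≤ μ {F | F ∈ C ∧ dist (Q F) (Q F') ≤ 2 * δ} := measure_mono fun F ⟨hFC, hFj⟩ =>
            ⟨hFC, (dist_triangle_right _ _ (c j)).trans (by linarith)⟩
        _ ≤ b := hF'b.le
  calc μ bad ≤ ∑ j, μ (bad ∩ ball j) := (measure_mono h_cover).trans (measure_iUnion_fintype_le _ _)
    _ ≤ ∑ _j : ι, b := Finset.sum_le_sum fun j _ => h_piece j
    _ = Fintype.card ι * b := by simp

lemma two_mul_mul_exp_lt_one {k m : ℕ} {ε : ℝ} (hε : 0 < ε)
    (hm : 1280000 / ε ^ 2 * log (2 * k) ≤ m) : 2 * k * exp (-2 * m * (ε / 400) ^ 2) < 1 := by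
  rcases k.eq_zero_or_pos with rfl | hk
  · simp
  have h2k : (1 : ℝ) < 2 * k := by
    have : (1 : ℝ) ≤ k := by exact_mod_cast hk
    linarith
  have hlog : 0 < log (2 * k) := log_pos h2k
  have hm' : 1280000 * log (2 * k) ≤ m * ε ^ 2 := by
    rwa [div_mul_eq_mul_div, div_le_iff₀ (by positivity)] at hm
  calc 2 * k * exp (-2 * m * (ε / 400) ^ 2) < 2 * k * exp (-log (2 * k)) := by
        gcongr
        nlinarith
    _ = 1 := by rw [exp_neg, exp_log (by linarith)]; field_simp

lemma natCast_add_one_pow_mul_div_pow_le {N : ℕ} (hN : 1 ≤ N) (m : ℕ) (V : ℝ≥0∞) :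
    ((N + 1 : ℝ≥0∞)) ^ m * (V / (N : ℝ≥0∞) ^ (2 * m)) ≤ (2 / (N : ℝ≥0∞)) ^ m * V := by
  have hN0 : (N : ℝ≥0∞) ^ m ≠ 0 := pow_ne_zero _ (by exact_mod_cast (by omega : N ≠ 0))
  have hNtop : (N : ℝ≥0∞) ^ m ≠ ⊤ := ENNReal.pow_ne_top (ENNReal.natCast_ne_top N)
  have h_le : (N + 1 : ℝ≥0∞) ^ m ≤ 2 ^ m * (N : ℝ≥0∞) ^ m := by
    rw [← mul_pow]
    gcongr
    exact_mod_cast (by omega : N + 1 ≤ 2 * N)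
  calc (N + 1 : ℝ≥0∞) ^ m * (V / (N : ℝ≥0∞) ^ (2 * m))
      ≤ 2 ^ m * (N : ℝ≥0∞) ^ m * (V / (N : ℝ≥0∞) ^ (2 * m)) := by gcongr
    _ = 2 ^ m * ((N : ℝ≥0∞) ^ m)⁻¹ * V * ((N : ℝ≥0∞) ^ m * ((N : ℝ≥0∞) ^ m)⁻¹) := by
      rw [two_mul, pow_add, div_eq_mul_inv, ENNReal.mul_inv (.inl hN0) (.inl hNtop)]
      ring
    _ = (2 / (N : ℝ≥0∞)) ^ m * V := by
      rw [ENNReal.mul_inv_cancel hN0 hNtop, mul_one, div_eq_mul_inv, mul_pow, ENNReal.inv_pow]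

theorem good_volume_lemma_general {X : Type*} [Fintype X] (hN : 2 ≤ Fintype.card X)
    (k : ℕ) (f : Fin k → X → Bool)
    (ε : ℝ) (hε : 0 < ε ∧ ε < 1)
    (m : ℕ) (hm : 0 < m) (hm2 : (1280000 / ε ^ 2) * Real.log (2 * k) ≤ (m : ℝ)) :
    volume {Fstar : X → ℝ |
        ((∀ x, 0 ≤ Fstar x) ∧ ∑ x, Fstar x ≤ (m : ℝ)) ∧
        volume {F : X → ℝ | ((∀ x, 0 ≤ F x) ∧ ∑ x, F x ≤ (m : ℝ)) ∧
            ∀ i : Fin k, |histQuery m (f i) F - histQuery m (f i) Fstar| ≤ ε / 200} <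
          volume {F : X → ℝ | (∀ x, 0 ≤ F x) ∧ ∑ x, F x ≤ (m : ℝ)} /
            (Fintype.card X : ENNReal) ^ (2 * m)} ≤
      (2 / (Fintype.card X : ENNReal)) ^ m *
        volume {F : X → ℝ | (∀ x, 0 ≤ F x) ∧ ∑ x, F x ≤ (m : ℝ)} := by
  classical
  have hε0 := hε.1
  set C := {F : X → ℝ | (∀ x, 0 ≤ F x) ∧ ∑ x, F x ≤ (m : ℝ)}
  set Q : (X → ℝ) → Fin k → ℝ := fun F i => histQuery m (f i) F
  have h_round : ∀ F ∈ C, ∃ ω : Fin m → Option X, dist (Q F) (Q (sampleHist ω)) ≤ ε / 400 := by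
    rintro F ⟨hF0, hF⟩
    obtain ⟨ω, hω⟩ := exists_sampleHist_abs_histQuery_sub_le f hm (δ := ε / 400)
      (by positivity) (by simpa using two_mul_mul_exp_lt_one hε0 hm2) hF0 hF
    refine ⟨ω, (dist_pi_le_iff (by positivity)).2 fun i => ?_⟩
    rw [Real.dist_eq, abs_sub_comm]
    exact hω i
  have h_good : ∀ Fstar, {F : X → ℝ | ((∀ x, 0 ≤ F x) ∧ ∑ x, F x ≤ (m : ℝ)) ∧
      ∀ i : Fin k, |histQuery m (f i) F - histQuery m (f i) Fstar| ≤ ε / 200} =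
      {F | F ∈ C ∧ dist (Q F) (Q Fstar) ≤ 2 * (ε / 400)} := by
    intro Fstar
    rw [show 2 * (ε / 400) = ε / 200 by ring]
    ext F
    simp only [dist_pi_le_iff (by positivity : 0 ≤ ε / 200), Real.dist_eq]
    rfl
  simp_rw [h_good]
  calc _ ≤ Fintype.card (Fin m → Option X) * (volume C / (Fintype.card X : ENNReal) ^ (2 * m)) :=
        measure_setOf_measure_lt_le_card_mul volume Q _ h_round _
    _ ≤ _ := by
        simpa using natCast_add_one_pow_mul_div_pow_le (by omega : 1 ≤ Fintype.card X) m (volume C)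

/-- **Lemma 10 (goodVolumeLemma).** Let `N = |X| ≥ 2`, `ε ∈ (0,1)` and
`m ≥ (1280000/ε²)·ln(2k)`, and let `C₀ = {F ∈ ℝ^X : F ≥ 0, ∑_x F_x ≤ m}` be the set of
fractional histograms.  With `Good_{ε′}(F*) = {F ∈ C₀ : |f_i(F) − f_i(F*)| ≤ ε′ for all i}`,
the set of `F* ∈ C₀` with `Vol(Good_{ε/200}(F*)) < Vol(C₀)/N^{2m}` has Lebesgue measure at most
`(2/N)^m · Vol(C₀)`. -/
theorem good_volume_lemma {X : Type*} [Fintype X] (hN : 2 ≤ Fintype.card X)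
    (k : ℕ) (hk : 1 ≤ k) (f : Fin k → X → Bool)
    (ε : ℝ) (hε : 0 < ε ∧ ε < 1)
    (m : ℕ) (hm : 0 < m) (hm2 : (1280000 / ε ^ 2) * Real.log (2 * k) ≤ (m : ℝ)) :
    volume {Fstar : X → ℝ |
        ((∀ x, 0 ≤ Fstar x) ∧ ∑ x, Fstar x ≤ (m : ℝ)) ∧
        volume {F : X → ℝ | ((∀ x, 0 ≤ F x) ∧ ∑ x, F x ≤ (m : ℝ)) ∧
            ∀ i : Fin k, |histQuery m (f i) F - histQuery m (f i) Fstar| ≤ ε / 200} <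
          volume {F : X → ℝ | (∀ x, 0 ≤ F x) ∧ ∑ x, F x ≤ (m : ℝ)} /
            (Fintype.card X : ENNReal) ^ (2 * m)} ≤
      (2 / (Fintype.card X : ENNReal)) ^ m *
        volume {F : X → ℝ | (∀ x, 0 ≤ F x) ∧ ∑ x, F x ≤ (m : ℝ)} :=
  good_volume_lemma_general hN k f ε hε m hm hm2
end
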